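/- arXiv:1005.1417 — 4 statements merged into one kernel-verified Lean document; each statement's English description precedes it below -/
import Mathlib

section
/- For every real number x and every positive real p, it holds that 0 ≤ (1/p)·ln(1 + e^{px} + e^{-px}) − |x| ≤ (1/p)·ln(3). -/
/-! Put `y = p x`. Since `1 + e^y + e^{-y}` is even in `y`, it lies between `e^{|y|}` and
`3 e^{|y|}`, so its logarithm lies between `|y|` and `|y| + ln 3`; dividing by `p` gives the
claim. -/

open Real

namespace Real

lemma one_add_exp_add_exp_neg_abs (y : ℝ) :
    1 + exp |y| + exp (-|y|) = 1 + exp y + exp (-y) := by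
  rcases abs_choice y with h | h <;> rw [h]
  rw [neg_neg]; ring

lemma exp_abs_le_one_add_exp_add_exp_neg (y : ℝ) : exp |y| ≤ 1 + exp y + exp (-y) := by
  rw [← one_add_exp_add_exp_neg_abs]
  linarith [exp_pos (-|y|)]

lemma one_add_exp_add_exp_neg_le (y : ℝ) : 1 + exp y + exp (-y) ≤ 3 * exp |y| := by
  rw [← one_add_exp_add_exp_neg_abs]
  have h₁ : 1 ≤ exp |y| := one_le_exp (abs_nonneg y)
  have h₂ : exp (-|y|) ≤ exp |y| := exp_le_exp.mpr (neg_le_self (abs_nonneg y))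
  linarith

lemma abs_le_log_one_add_exp_add_exp_neg (y : ℝ) : |y| ≤ log (1 + exp y + exp (-y)) :=
  (le_log_iff_exp_le (by positivity)).mpr (exp_abs_le_one_add_exp_add_exp_neg y)

lemma log_one_add_exp_add_exp_neg_le (y : ℝ) : log (1 + exp y + exp (-y)) ≤ |y| + log 3 := by
  calc log (1 + exp y + exp (-y)) ≤ log (3 * exp |y|) :=
        log_le_log (by positivity) (one_add_exp_add_exp_neg_le y)
    _ = |y| + log 3 := by rw [log_mul (by norm_num) (exp_ne_zero _), log_exp, add_comm]

end Real

theorem stmt_0 (x p : ℝ) (hp : 0 < p) :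
    0 ≤ (1 / p) * Real.log (1 + Real.exp (p * x) + Real.exp (-(p * x))) - |x| ∧
      (1 / p) * Real.log (1 + Real.exp (p * x) + Real.exp (-(p * x))) - |x| ≤
        (1 / p) * Real.log 3 := by
  have habs : |p * x| = p * |x| := by rw [abs_mul, abs_of_pos hp]
  have hlower := abs_le_log_one_add_exp_add_exp_neg (p * x)
  have hupper := log_one_add_exp_add_exp_neg_le (p * x)
  rw [habs] at hlower hupper
  set L := log (1 + exp (p * x) + exp (-(p * x)))
  have hL : 1 / p * L - |x| = 1 / p * (L - p * |x|) := by field_simp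
  rw [hL]
  constructor
  · exact mul_nonneg (by positivity) (by linarith)
  · exact mul_le_mul_of_nonneg_left (by linarith) (by positivity)
end

section
/- Let M be an n×n real matrix and q ∈ ℝⁿ. If (z*, w*) solves LCP(M,q), i.e., z* ≥ 0, w* ≥ 0, w* = Mz* + q, and ⟨z*, w*⟩ = 0, then x* := (z* − w*)/2 satisfies F(x*) = 0, where F(x) = (M+I)x + (M−I)|x| + q. -/
open Matrix

theorem stmt_4 {n : ℕ} (M : Matrix (Fin n) (Fin n) ℝ) (q z w : Fin n → ℝ)
    (hz : ∀ i, 0 ≤ z i) (hw : ∀ i, 0 ≤ w i) (hMw : w = M.mulVec z + q)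
    (hzw : z ⬝ᵥ w = 0) :
    (M + 1).mulVec ((z - w) / 2) + (M - 1).mulVec (fun i => |((z - w) / 2) i|) + q = 0 := by
  have hterm : ∀ i, z i * w i = 0 := by
    intro i
    have h := (Finset.sum_eq_zero_iff_of_nonneg
      (fun j _ => mul_nonneg (hz j) (hw j))).mp hzw
    exact h i (Finset.mem_univ i)
  have habs : (fun i => |((z - w) / 2) i|) = (z + w) / 2 := by
    funext i
    have := hterm i
    rcases mul_eq_zero.mp this with h | h <;>
      simp only [Pi.div_apply, Pi.sub_apply, Pi.add_apply, h] <;>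
      rw [abs_div] <;> simp [abs_of_nonneg, hz i, hw i, abs_of_nonpos, neg_nonpos]
  rw [habs]
  have hd : (z - w) / 2 = (1/2 : ℝ) • z - (1/2 : ℝ) • w := by
    funext i; simp [Pi.div_apply]; ring
  have hs : (z + w) / 2 = (1/2 : ℝ) • z + (1/2 : ℝ) • w := by
    funext i; simp [Pi.div_apply]; ring
  rw [hd, hs, Matrix.add_mulVec, Matrix.sub_mulVec, Matrix.one_mulVec, Matrix.one_mulVec,
    Matrix.mulVec_sub, Matrix.mulVec_add, Matrix.mulVec_smul, Matrix.mulVec_smul, hMw]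
  funext i
  simp [Pi.add_apply, Pi.sub_apply, Pi.smul_apply]
  ring
end

section
/- Let M be a symmetric positive definite real n×n matrix and q ∈ ℝⁿ. The map T(x) := (I+M)^{-1}(I−M)|x| − (I+M)^{-1}q is a contraction on ℝⁿ (with respect to the Euclidean norm), and hence has a unique fixed point x*; moreover this x* is the unique zero of F(x) = (M+I)x + (M−I)|x| + q. -/
/-! The Cayley transform `(1 + M)⁻¹ * (1 - M)` sends `w + M w` to `w - M w`, and for `w ≠ 0`
positive definiteness gives `⟪w, M w⟫ > 0`, hence `‖w - M w‖ < ‖w + M w‖`. By compactness of the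
unit sphere the Cayley transform therefore has operator norm `< 1` on `EuclideanSpace`. Since the
componentwise absolute value is 1-Lipschitz, `T` is a contraction and Banach's fixed point theorem
applies; multiplying `T x = x` by `1 + M` turns it into `F x = 0`. -/

open Matrix
open scoped RealInnerProductSpace

theorem norm_sub_lt_norm_add_of_inner_pos {E : Type*} [NormedAddCommGroup E]
    [InnerProductSpace ℝ E] {x y : E} (h : 0 < ⟪x, y⟫) : ‖x - y‖ < ‖x + y‖ := by
  have hsq : ‖x - y‖ ^ 2 < ‖x + y‖ ^ 2 := by
    rw [norm_sub_sq_real, norm_add_sq_real]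
    linarith
  exact lt_of_pow_lt_pow_left₀ 2 (norm_nonneg _) hsq

namespace ContinuousLinearMap

variable {E F : Type*} [NormedAddCommGroup E] [NormedSpace ℝ E] [ProperSpace E]
  [NormedAddCommGroup F] [NormedSpace ℝ F]

theorem exists_mem_sphere_norm_apply_eq_opNorm [Nontrivial E] (f : E →L[ℝ] F) :
    ∃ x ∈ Metric.sphere (0 : E) 1, ‖f x‖ = ‖f‖ := by
  have hK : IsCompact ((fun x => ‖f x‖) '' Metric.sphere (0 : E) 1) :=
    (isCompact_sphere 0 1).image (by fun_prop)
  have hne := (NormedSpace.sphere_nonempty (x := (0 : E)).mpr zero_le_one).image fun x => ‖f x‖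
  simpa [f.sSup_sphere_eq_norm] using hK.sSup_mem hne

theorem opNNNorm_lt_one_of_norm_apply_lt (f : E →L[ℝ] F)
    (hf : ∀ x, x ≠ 0 → ‖f x‖ < ‖x‖) : ‖f‖₊ < 1 := by
  cases subsingleton_or_nontrivial E
  · simp
  obtain ⟨x, hx, hfx⟩ := f.exists_mem_sphere_norm_apply_eq_opNorm
  rw [mem_sphere_zero_iff_norm] at hx
  rw [← NNReal.coe_lt_coe, coe_nnnorm, NNReal.coe_one, ← hfx, ← hx]
  exact hf x (norm_ne_zero_iff.mp (by rw [hx]; exact one_ne_zero))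

end ContinuousLinearMap

theorem EuclideanSpace.lipschitzWith_abs {ι : Type*} [Fintype ι] :
    LipschitzWith 1 fun x : EuclideanSpace ℝ ι => WithLp.toLp 2 fun i => |x i| := by
  refine LipschitzWith.of_dist_le_mul fun x y => ?_
  rw [NNReal.coe_one, one_mul, EuclideanSpace.dist_eq, EuclideanSpace.dist_eq]
  gcongr with i
  simp only [Real.dist_eq]
  exact abs_abs_sub_abs_le_abs_sub _ _

namespace Matrix

variable {ι : Type*} [Fintype ι] [DecidableEq ι]

theorem inv_mulVec_eq_iff {R : Type*} [CommRing R] {A : Matrix ι ι R} (hA : IsUnit A)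
    {u v : ι → R} : A⁻¹ *ᵥ u = v ↔ u = A *ᵥ v := by
  have hdet := (isUnit_iff_isUnit_det A).mp hA
  constructor
  · rintro rfl
    rw [mulVec_mulVec, mul_nonsing_inv _ hdet, one_mulVec]
  · rintro rfl
    rw [mulVec_mulVec, nonsing_inv_mul _ hdet, one_mulVec]

theorem one_add_inv_mul_mulVec_sub_eq_iff {R : Type*} [CommRing R] {M : Matrix ι ι R}
    (hM : IsUnit (1 + M)) (q x y : ι → R) :
    ((1 + M)⁻¹ * (1 - M)) *ᵥ y - (1 + M)⁻¹ *ᵥ q = x ↔ (M + 1) *ᵥ x + (M - 1) *ᵥ y + q = 0 := by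
  have hF : (M + 1) *ᵥ x + (M - 1) *ᵥ y + q = (1 + M) *ᵥ x - ((1 - M) *ᵥ y - q) := by
    simp only [add_mulVec, sub_mulVec, one_mulVec]
    abel
  rw [← mulVec_mulVec, ← mulVec_sub, inv_mulVec_eq_iff hM, hF, sub_eq_zero, eq_comm]

theorem PosDef.norm_sub_lt_norm_add {M : Matrix ι ι ℝ} (hM : M.PosDef)
    {v : EuclideanSpace ℝ ι} (hv : v ≠ 0) :
    ‖v - toEuclideanCLM (𝕜 := ℝ) M v‖ < ‖v + toEuclideanCLM (𝕜 := ℝ) M v‖ := by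
  apply norm_sub_lt_norm_add_of_inner_pos
  rw [inner_toEuclideanCLM]
  simpa using hM.dotProduct_mulVec_pos (x := WithLp.ofLp v) (by simpa using hv)

theorem PosDef.nnnorm_toEuclideanCLM_cayley_lt_one {M : Matrix ι ι ℝ} (hM : M.PosDef) :
    ‖toEuclideanCLM (n := ι) (𝕜 := ℝ) ((1 + M)⁻¹ * (1 - M))‖₊ < 1 := by
  set C := toEuclideanCLM (n := ι) (𝕜 := ℝ)
  obtain ⟨u, hu⟩ : IsUnit (1 + M) := (PosDef.one.add hM).isUnit
  have hcomm : Commute (1 + M)⁻¹ (1 - M) := by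
    rw [← hu, ← coe_units_inv]
    refine Commute.units_inv_left ?_
    rw [hu]
    exact (Commute.one_right _).sub_right ((Commute.one_left M).add_left (Commute.refl M))
  refine ContinuousLinearMap.opNNNorm_lt_one_of_norm_apply_lt _ fun v hv => ?_
  set w := C (1 + M)⁻¹ v
  have hvw : v = w + C M w := by
    have : C (1 + M) * C (1 + M)⁻¹ = 1 := by
      rw [← map_mul, ← hu, ← coe_units_inv, Units.mul_inv, map_one]
    simpa [map_add, add_mul] using (congrArg (· v) this).symm
  have hw : w ≠ 0 := by
    rintro h
    simp [h] at hvw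
    exact hv hvw
  have hAv : C ((1 + M)⁻¹ * (1 - M)) v = w - C M w := by
    simp [hcomm.eq, map_mul, map_sub, w]
  rw [hAv, hvw]
  exact hM.norm_sub_lt_norm_add hw

end Matrix

theorem stmt_7_general {n : ℕ} (M : Matrix (Fin n) (Fin n) ℝ)
    (hpd : M.PosDef) (q : Fin n → ℝ) :
    let T : (Fin n → ℝ) → (Fin n → ℝ) :=
      fun x => ((1 + M)⁻¹ * (1 - M)).mulVec (fun i => |x i|) - (1 + M)⁻¹.mulVec q
    (∃ K : NNReal, K < 1 ∧ LipschitzWith K (fun x : EuclideanSpace ℝ (Fin n) =>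
        (WithLp.equiv 2 (Fin n → ℝ)).symm (T (WithLp.equiv 2 (Fin n → ℝ) x)))) ∧
    ∃ xs : Fin n → ℝ, T xs = xs ∧ (∀ y : Fin n → ℝ, T y = y → y = xs) ∧
      ∀ x : Fin n → ℝ,
        ((M + 1).mulVec x + (M - 1).mulVec (fun i => |x i|) + q = 0 ↔ x = xs) := by
  intro T
  set L := toEuclideanCLM (n := Fin n) (𝕜 := ℝ) ((1 + M)⁻¹ * (1 - M))
  set f := fun x : EuclideanSpace ℝ (Fin n) => WithLp.toLp 2 (T x.ofLp)
  have hf : ContractingWith ‖L‖₊ f := by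
    refine ⟨hpd.nnnorm_toEuclideanCLM_cayley_lt_one, ?_⟩
    have h := (L.lipschitz.comp EuclideanSpace.lipschitzWith_abs).sub
      (LipschitzWith.const (WithLp.toLp 2 ((1 + M)⁻¹ *ᵥ q)))
    rwa [mul_one, add_zero] at h
  have hT : ∀ x, T x = x ↔ (M + 1) *ᵥ x + (M - 1) *ᵥ (fun i => |x i|) + q = 0 := fun x =>
    one_add_inv_mul_mulVec_sub_eq_iff (PosDef.one.add hpd).isUnit q x _
  set xs := ContractingWith.fixedPoint f hf
  have hfix : T xs.ofLp = xs.ofLp := congrArg WithLp.ofLp hf.fixedPoint_isFixedPt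
  have huniq : ∀ y, T y = y → y = xs.ofLp := fun y hy =>
    congrArg WithLp.ofLp (hf.fixedPoint_unique (congrArg (WithLp.toLp 2) hy))
  refine ⟨⟨‖L‖₊, hf⟩, xs.ofLp, hfix, huniq, fun x => ?_⟩
  rw [← hT]
  exact ⟨huniq x, fun hx => hx ▸ hfix⟩

theorem stmt_7 {n : ℕ} (M : Matrix (Fin n) (Fin n) ℝ)
    (hsymm : M.IsSymm) (hpd : M.PosDef) (q : Fin n → ℝ) :
    let T : (Fin n → ℝ) → (Fin n → ℝ) :=
      fun x => ((1 + M)⁻¹ * (1 - M)).mulVec (fun i => |x i|) - (1 + M)⁻¹.mulVec q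
    (∃ K : NNReal, K < 1 ∧ LipschitzWith K (fun x : EuclideanSpace ℝ (Fin n) =>
        (WithLp.equiv 2 (Fin n → ℝ)).symm (T (WithLp.equiv 2 (Fin n → ℝ) x)))) ∧
    ∃ xs : Fin n → ℝ, T xs = xs ∧ (∀ y : Fin n → ℝ, T y = y → y = xs) ∧
      ∀ x : Fin n → ℝ,
        ((M + 1).mulVec x + (M - 1).mulVec (fun i => |x i|) + q = 0 ↔ x = xs) :=
  stmt_7_general M hpd q
end

section
/- Let M be a symmetric positive definite n×n matrix with smallest eigenvalue λ_min > 0, and let x₁, x₂ ∈ ℝⁿ be zeros of F(x) = (M+I)x + (M−I)|x| + q. Then x₁ = x₂. -/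
open Matrix

/-!
Write `d = x₁ - x₂` and `e = |x₁| - |x₂|`. Subtracting the two equations gives
`M (d + e) + (d - e) = 0`; pairing with `d + e` yields
`(d + e)ᵀ M (d + e) + (d ⬝ d - e ⬝ e) = 0`. Both terms are nonnegative, since `|e i| ≤ |d i|`
by the reverse triangle inequality, so positivity of the quadratic form forces `d + e = 0`,
whence also `d - e = 0`, i.e. `d = 0`.
-/

lemma add_one_mulVec_add_sub_one_mulVec {ι R : Type*} [Fintype ι] [DecidableEq ι] [Ring R]
    (M : Matrix ι ι R) (x y : ι → R) :
    (M + 1) *ᵥ x + (M - 1) *ᵥ y = M *ᵥ (x + y) + (x - y) := by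
  rw [add_mulVec, sub_mulVec, one_mulVec, one_mulVec, mulVec_add]
  abel

section AbsoluteValueEquation

variable {ι R : Type*} [Fintype ι] [Field R] [LinearOrder R] [IsStrictOrderedRing R]

lemma dotProduct_abs_sub_abs_le (x y : ι → R) :
    ((fun i => |x i|) - fun i => |y i|) ⬝ᵥ ((fun i => |x i|) - fun i => |y i|)
      ≤ (x - y) ⬝ᵥ (x - y) :=
  Finset.sum_le_sum fun i _ => by
    simpa only [Pi.sub_apply, ← sq] using sq_le_sq.mpr (abs_abs_sub_abs_le_abs_sub (x i) (y i))

theorem eq_of_add_one_mulVec_add_sub_one_mulVec_abs_eq [DecidableEq ι] {M : Matrix ι ι R}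
    (hM : ∀ v : ι → R, v ≠ 0 → 0 < v ⬝ᵥ M *ᵥ v) {x₁ x₂ : ι → R}
    (h : (M + 1) *ᵥ x₁ + (M - 1) *ᵥ (fun i => |x₁ i|)
      = (M + 1) *ᵥ x₂ + (M - 1) *ᵥ (fun i => |x₂ i|)) :
    x₁ = x₂ := by
  have habs := dotProduct_abs_sub_abs_le x₁ x₂
  have heq : M *ᵥ ((x₁ - x₂) + ((fun i => |x₁ i|) - fun i => |x₂ i|))
      + ((x₁ - x₂) - ((fun i => |x₁ i|) - fun i => |x₂ i|)) = 0 := by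
    rw [← add_one_mulVec_add_sub_one_mulVec, mulVec_sub, mulVec_sub, ← sub_eq_zero.mpr h]
    abel
  rw [← sub_eq_zero]
  generalize x₁ - x₂ = d at habs heq ⊢
  generalize (fun i => |x₁ i|) - (fun i => |x₂ i|) = e at habs heq
  have hsum : d + e = 0 := by
    by_contra hne
    have hpair : (d + e) ⬝ᵥ M *ᵥ (d + e) + (d + e) ⬝ᵥ (d - e) = 0 := by
      rw [← dotProduct_add, heq, dotProduct_zero]
    have hdot : (d + e) ⬝ᵥ (d - e) = d ⬝ᵥ d - e ⬝ᵥ e := by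
      rw [add_dotProduct, dotProduct_sub, dotProduct_sub, dotProduct_comm e d]
      abel
    linarith [hM _ hne]
  have hdiff : d - e = 0 := by simpa only [hsum, mulVec_zero, zero_add] using heq
  funext i
  have hsum_i : d i + e i = 0 := congrFun hsum i
  have hdiff_i : d i - e i = 0 := congrFun hdiff i
  show d i = 0
  linarith

end AbsoluteValueEquation

theorem stmt_14_general {n : ℕ} (M : Matrix (Fin n) (Fin n) ℝ)
    (hpd : M.PosDef) (q x₁ x₂ : Fin n → ℝ)
    (h1 : (M + 1).mulVec x₁ + (M - 1).mulVec (fun i => |x₁ i|) + q = 0)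
    (h2 : (M + 1).mulVec x₂ + (M - 1).mulVec (fun i => |x₂ i|) + q = 0) :
    x₁ = x₂ :=
  eq_of_add_one_mulVec_add_sub_one_mulVec_abs_eq
    (fun v hv => by simpa using hpd.dotProduct_mulVec_pos hv)
    (add_right_cancel (h1.trans h2.symm))

theorem stmt_14 {n : ℕ} (M : Matrix (Fin n) (Fin n) ℝ)
    (hsymm : M.IsSymm) (hpd : M.PosDef) (lammin : ℝ) (hlam : 0 < lammin)
    (hmin : ∀ μ ∈ spectrum ℝ M, lammin ≤ μ) (q x₁ x₂ : Fin n → ℝ)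
    (h1 : (M + 1).mulVec x₁ + (M - 1).mulVec (fun i => |x₁ i|) + q = 0)
    (h2 : (M + 1).mulVec x₂ + (M - 1).mulVec (fun i => |x₂ i|) + q = 0) :
    x₁ = x₂ :=
  stmt_14_general M hpd q x₁ x₂ h1 h2
end
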